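/- Let 0 ≤ k ≤ n and let N = [n choose k]₂. Then ‖ (1/N) ∑_{W ∈ Gr₂(n,k)} |W⟩⟨W| ‖ = (1/N) ∑_{m=0}^{k} 2^{m²} [n−k choose m]₂ [k choose m]₂ · 2^{−m}, where ‖·‖ is the operator norm on (ℂ²)^{⊗n}; moreover the vector ∑_{W ∈ Gr₂(n,k)} |W⟩ is an eigenvector of ∑_{W} |W⟩⟨W| attaining this norm. -/

import Mathlib

/-!
In the computational basis, `A = ∑_W |W⟩⟨W|` has the nonnegative symmetric matrix
`2^{-k} · #{W ∋ u, v}`, and `∑_W |W⟩` is proportional to `φ v = #{W ∋ v}`. Every `W` consists of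
`0`, which lies in all `[n choose k]₂` subspaces, and of `2^k - 1` nonzero vectors, each lying in
`[n-1 choose k-1]₂` of them (subspaces through `v` correspond to subspaces of `𝔽₂ⁿ/⟨v⟩`). So
`∑_{v ∈ W} φ v` does not depend on `W`, which makes `φ` an eigenvector with eigenvalue
`λ = 2^{-k} ([n choose k]₂ + (2^k - 1) [n-1 choose k-1]₂)`, and a Schur test with the weight `φ`
gives `‖A‖ ≤ λ`. Pascal's rule and the q-Vandermonde identity
`∑_m 2^{m²} [a choose m]₂ [j choose m]₂ = [a+j choose j]₂` turn `λ` into the stated sum.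
-/

open scoped Classical

/-- The subspace state `|W⟩ = 2^{-k/2} ∑_{u ∈ W} |u⟩` in `(ℂ²)^{⊗n}`, identified with
`EuclideanSpace ℂ (Fin n → ZMod 2)` via the computational basis `{|v⟩ : v ∈ 𝔽₂ⁿ}`. -/
noncomputable def subspaceState {n : ℕ} (W : Submodule (ZMod 2) (Fin n → ZMod 2)) :
    EuclideanSpace ℂ (Fin n → ZMod 2) :=
  (((Real.sqrt 2 : ℝ) : ℂ) ^ (Module.finrank (ZMod 2) W))⁻¹ •
    ∑ u : W, EuclideanSpace.single (u : Fin n → ZMod 2) (1 : ℂ)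

/-- The rank-one operator `|ψ⟩⟨φ|`. -/
noncomputable def outer {ι : Type*} [Fintype ι] [DecidableEq ι]
    (ψ φ : EuclideanSpace ℂ ι) : EuclideanSpace ℂ ι →L[ℂ] EuclideanSpace ℂ ι :=
  (innerSL ℂ φ).smulRight ψ

/-- The Grassmannian `Gr₂(n,k)`: the set of `k`-dimensional subspaces of `𝔽₂ⁿ`. -/
abbrev Grassmannian (n k : ℕ) :=
  {W : Submodule (ZMod 2) (Fin n → ZMod 2) // Module.finrank (ZMod 2) W = k}

noncomputable instance {n k : ℕ} : Fintype (Grassmannian n k) := Fintype.ofFinite _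

/-- The Gaussian binomial coefficient `[n choose k]₂`, as a real number, with the convention
that it vanishes when `k > n`; `[n choose k]₂ = |Gr₂(n,k)|`. -/
noncomputable def gbinomR (n k : ℕ) : ℝ :=
  (∏ i ∈ Finset.range k, ((2 : ℝ) ^ (n - i) - 1)) /
    (∏ i ∈ Finset.range k, ((2 : ℝ) ^ (k - i) - 1))

open Finset

lemma two_pow_sub_one_pos {e : ℕ} (he : e ≠ 0) : (0 : ℝ) < 2 ^ e - 1 :=
  sub_pos.2 (one_lt_pow₀ one_lt_two he)

lemma prod_two_pow_sub_one_pos (k : ℕ) : 0 < ∏ i ∈ range k, ((2 : ℝ) ^ (k - i) - 1) :=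
  prod_pos fun i hi ↦ two_pow_sub_one_pos (by simp at hi; omega)

lemma gbinomR_zero_right (n : ℕ) : gbinomR n 0 = 1 := by simp [gbinomR]

lemma gbinomR_of_lt {n k : ℕ} (h : n < k) : gbinomR n k = 0 := by
  rw [gbinomR, prod_eq_zero (mem_range.2 h) (by simp), zero_div]

lemma gbinomR_nonneg (n k : ℕ) : 0 ≤ gbinomR n k :=
  div_nonneg (prod_nonneg fun _ _ ↦ sub_nonneg.2 (one_le_pow₀ one_le_two))
    (prod_two_pow_sub_one_pos k).le

lemma gbinomR_pos {n k : ℕ} (h : k ≤ n) : 0 < gbinomR n k :=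
  div_pos (prod_pos fun i hi ↦ two_pow_sub_one_pos (by simp at hi; omega))
    (prod_two_pow_sub_one_pos k)

lemma prod_range_succ_two_pow_sub_one (k : ℕ) :
    ∏ i ∈ range (k + 1), ((2 : ℝ) ^ (k + 1 - i) - 1) =
      (∏ i ∈ range k, ((2 : ℝ) ^ (k - i) - 1)) * (2 ^ (k + 1) - 1) := by
  rw [prod_range_succ']
  simp [Nat.succ_sub_succ]

lemma gbinomR_succ_mul (n k : ℕ) :
    gbinomR n (k + 1) * (2 ^ (k + 1) - 1) = (2 ^ (n - k) - 1) * gbinomR n k := by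
  have := (prod_two_pow_sub_one_pos k).ne'
  have := (two_pow_sub_one_pos (Nat.add_one_ne_zero k)).ne'
  rw [gbinomR, gbinomR, prod_range_succ, prod_range_succ_two_pow_sub_one]
  field_simp

lemma gbinomR_succ_mul_pred (n k : ℕ) :
    gbinomR n (k + 1) * (2 ^ (k + 1) - 1) = (2 ^ n - 1) * gbinomR (n - 1) k := by
  rcases n with _ | n
  · simp [gbinomR_of_lt]
  have := (prod_two_pow_sub_one_pos k).ne'
  have := (two_pow_sub_one_pos (Nat.add_one_ne_zero k)).ne'
  rw [gbinomR, gbinomR, prod_range_succ', prod_range_succ_two_pow_sub_one]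
  simp only [Nat.succ_sub_succ, tsub_zero]
  field_simp

lemma gbinomR_succ_succ (n k : ℕ) :
    gbinomR (n + 1) (k + 1) = gbinomR n (k + 1) + 2 ^ (n - k) * gbinomR n k := by
  rcases lt_or_ge n k with h | h
  · rw [gbinomR_of_lt (by omega : n + 1 < k + 1), gbinomR_of_lt (by omega : n < k + 1),
      gbinomR_of_lt h]
    ring
  · have hpow : (2 : ℝ) ^ (n - k) * 2 ^ (k + 1) = 2 ^ (n + 1) := by
      rw [← pow_add]; congr 1; omega
    have hsucc := gbinomR_succ_mul_pred (n + 1) k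
    rw [Nat.add_sub_cancel] at hsucc
    apply mul_right_cancel₀ (two_pow_sub_one_pos (Nat.add_one_ne_zero k)).ne'
    linear_combination hsucc - gbinomR_succ_mul n k - gbinomR n k * hpow

lemma gbinomR_succ_succ' (n k : ℕ) :
    gbinomR (n + 1) (k + 1) = 2 ^ (k + 1) * gbinomR n (k + 1) + gbinomR n k := by
  linear_combination gbinomR_succ_succ n k - gbinomR_succ_mul n k

lemma gbinomR_vandermonde_shift_of {j : ℕ}
    (hV : ∀ a, ∑ m ∈ range (j + 1), 2 ^ (m ^ 2) * gbinomR a m * gbinomR j m = gbinomR (a + j) j)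
    (a : ℕ) :
    ∑ m ∈ range (j + 1), 2 ^ (m ^ 2 + m) * gbinomR a (m + 1) * gbinomR j m =
      gbinomR (a + j) (j + 1) := by
  induction a with
  | zero => simp [gbinomR_of_lt]
  | succ a ih =>
    have hterm : ∀ m ∈ range (j + 1),
        (2 : ℝ) ^ (m ^ 2 + m) * gbinomR (a + 1) (m + 1) * gbinomR j m =
          2 ^ (m ^ 2 + m) * gbinomR a (m + 1) * gbinomR j m +
            2 ^ a * (2 ^ (m ^ 2) * gbinomR a m * gbinomR j m) := by
      intro m _
      rw [gbinomR_succ_succ]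
      rcases lt_or_ge a m with h | h
      · simp [gbinomR_of_lt h]
      · have hpow : (2 : ℝ) ^ (m ^ 2 + m) * 2 ^ (a - m) = 2 ^ a * 2 ^ (m ^ 2) := by
          rw [← pow_add, ← pow_add]; congr 1; omega
        linear_combination (gbinomR a m * gbinomR j m) * hpow
    rw [sum_congr rfl hterm, sum_add_distrib, ← mul_sum, ih, hV,
      show a + 1 + j = a + j + 1 by omega, gbinomR_succ_succ, Nat.add_sub_cancel]

lemma sum_pow_mul_gbinomR_mul_gbinomR_shift {a j : ℕ} (e : ℕ → ℕ) :
    ∑ m ∈ range (j + 1), 2 ^ e m * gbinomR a m * gbinomR j m =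
      ∑ m ∈ range (j + 1), 2 ^ e (m + 1) * gbinomR a (m + 1) * gbinomR j (m + 1) +
        2 ^ e 0 := by
  have hlast : (2 : ℝ) ^ e (j + 1) * gbinomR a (j + 1) * gbinomR j (j + 1) = 0 := by
    simp [gbinomR_of_lt]
  rw [← add_zero (∑ m ∈ range (j + 1), _), ← hlast, ← sum_range_succ, sum_range_succ']
  simp [gbinomR_zero_right]

theorem gbinomR_vandermonde (a j : ℕ) :
    ∑ m ∈ range (j + 1), 2 ^ (m ^ 2) * gbinomR a m * gbinomR j m = gbinomR (a + j) j := by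
  induction j generalizing a with
  | zero => simp [gbinomR_zero_right]
  | succ j ih =>
    have hG := gbinomR_vandermonde_shift_of ih a
    have hterm : ∀ m ∈ range (j + 1),
        (2 : ℝ) ^ ((m + 1) ^ 2) * gbinomR a (m + 1) * gbinomR (j + 1) (m + 1) =
          2 ^ ((m + 1) ^ 2) * gbinomR a (m + 1) * gbinomR j (m + 1) +
            2 ^ (j + 1) * (2 ^ (m ^ 2 + m) * gbinomR a (m + 1) * gbinomR j m) := by
      intro m hm
      rw [gbinomR_succ_succ]
      have hpow : (2 : ℝ) ^ (j + 1) * 2 ^ (m ^ 2 + m) = 2 ^ ((m + 1) ^ 2) * 2 ^ (j - m) := by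
        rw [← pow_add, ← pow_add]; congr 1; simp at hm; ring_nf; omega
      linear_combination (-(gbinomR a (m + 1) * gbinomR j m)) * hpow
    have hV := ih a
    rw [sum_pow_mul_gbinomR_mul_gbinomR_shift (fun m ↦ m ^ 2)] at hV
    rw [sum_range_succ', sum_congr rfl hterm, sum_add_distrib, ← mul_sum, hG,
      ← add_assoc, gbinomR_succ_succ', ← hV]
    simp [gbinomR_zero_right]
    ring

theorem gbinomR_vandermonde_shift (a j : ℕ) :
    ∑ m ∈ range (j + 1), 2 ^ (m ^ 2 + m) * gbinomR a (m + 1) * gbinomR j m =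
      gbinomR (a + j) (j + 1) :=
  gbinomR_vandermonde_shift_of (gbinomR_vandermonde · j) a

theorem sum_gbinomR_mul_gbinomR_mul_zpow (a j : ℕ) :
    ∑ m ∈ range (j + 2),
        2 ^ (m ^ 2) * gbinomR a m * gbinomR (j + 1) m * (2 : ℝ) ^ (-(m : ℤ)) =
      gbinomR (a + j) j + gbinomR (a + j) (j + 1) := by
  have hterm : ∀ m ∈ range (j + 1),
      2 ^ ((m + 1) ^ 2) * gbinomR a (m + 1) * gbinomR (j + 1) (m + 1) *
          (2 : ℝ) ^ (-((m + 1 : ℕ) : ℤ)) =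
        2 ^ ((m + 1) ^ 2) * gbinomR a (m + 1) * gbinomR j (m + 1) +
          2 ^ (m ^ 2 + m) * gbinomR a (m + 1) * gbinomR j m := by
    intro m _
    have hpow : (2 : ℝ) ^ ((m + 1) ^ 2) = 2 ^ (m ^ 2 + m) * 2 ^ (m + 1) := by
      rw [← pow_add]; congr 1; ring
    rw [gbinomR_succ_succ' j m, zpow_neg, zpow_natCast, hpow]
    field_simp
  have hV := gbinomR_vandermonde a j
  rw [sum_pow_mul_gbinomR_mul_gbinomR_shift (fun m ↦ m ^ 2)] at hV
  rw [sum_range_succ', sum_congr rfl hterm, sum_add_distrib, gbinomR_vandermonde_shift, ← hV]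
  simp [gbinomR_zero_right]
  ring

section Counting

open Module

lemma Submodule.finrank_comap_mkQ {K V : Type*} [Field K] [AddCommGroup V] [Module K V]
    [FiniteDimensional K V] (p : Submodule K V) (U : Submodule K (V ⧸ p)) :
    finrank K (U.comap p.mkQ) = finrank K U + finrank K p := by
  set f := p.mkQ.domRestrict (U.comap p.mkQ)
  have hrange : LinearMap.range f = U := by
    rw [LinearMap.range_domRestrict, Submodule.map_comap_eq_of_surjective p.mkQ_surjective]
  have hker : finrank K (LinearMap.ker f) = finrank K p := by
    rw [LinearMap.ker_domRestrict, Submodule.ker_mkQ,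
      (Submodule.comapSubtypeEquivOfLe (Submodule.le_comap_mkQ p U)).finrank_eq]
  rw [← LinearMap.finrank_range_add_finrank_ker f, hrange, hker]

lemma card_finrank_succ_mem_eq_card_quotient {K V : Type*} [Field K] [AddCommGroup V] [Module K V]
    [FiniteDimensional K V] {v : V} (hv : v ≠ 0) (k : ℕ) :
    Nat.card {W : {W : Submodule K V // finrank K W = k + 1} // v ∈ W.1} =
      Nat.card {U : Submodule K (V ⧸ K ∙ v) // finrank K U = k} := by
  set p := K ∙ v
  have hp : finrank K p = 1 := finrank_span_singleton hv
  have e₁ : {W : {W : Submodule K V // finrank K W = k + 1} // v ∈ W.1} ≃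
      {W : Set.Ici p // finrank K W.1 = k + 1} :=
    (Equiv.subtypeSubtypeEquivSubtypeInter _ (v ∈ ·)).trans <|
      (Equiv.subtypeEquivRight fun W ↦ by
        simp [p, Submodule.span_singleton_le_iff_mem, and_comm]).trans
      (Equiv.subtypeSubtypeEquivSubtypeInter (· ∈ Set.Ici p) (finrank K · = k + 1)).symm
  have e₂ : {U : Submodule K (V ⧸ p) // finrank K U = k} ≃
      {W : Set.Ici p // finrank K W.1 = k + 1} :=
    (Submodule.comapMkQRelIso p).toEquiv.subtypeEquiv fun U ↦ by
      change _ ↔ finrank K (U.comap p.mkQ) = k + 1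
      rw [Submodule.finrank_comap_mkQ, hp, Nat.add_right_cancel_iff]
  exact Nat.card_congr (e₁.trans e₂.symm)

lemma finrank_quotient_span_singleton {K V : Type*} [Field K] [AddCommGroup V] [Module K V]
    [FiniteDimensional K V] {v : V} (hv : v ≠ 0) :
    finrank K (V ⧸ K ∙ v) = finrank K V - 1 := by
  have := Submodule.finrank_quotient_add_finrank (K ∙ v)
  rw [finrank_span_singleton hv] at this
  omega

lemma card_submodule_eq_two_pow {V : Type*} [AddCommGroup V] [Module (ZMod 2) V] [Finite V]
    (W : Submodule (ZMod 2) V) : Nat.card W = 2 ^ finrank (ZMod 2) W := by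
  rw [Module.natCard_eq_pow_finrank (K := ZMod 2), Nat.card_zmod]

theorem card_submodule_finrank_eq_gbinomR {V : Type*} [AddCommGroup V] [Module (ZMod 2) V]
    [Finite V] (k : ℕ) :
    (Nat.card {W : Submodule (ZMod 2) V // finrank (ZMod 2) W = k} : ℝ) =
      gbinomR (finrank (ZMod 2) V) k := by
  induction k generalizing V with
  | zero =>
    simp [gbinomR_zero_right]
  | succ k ih =>
    have := Fintype.ofFinite V
    have := Fintype.ofFinite {W : Submodule (ZMod 2) V // finrank (ZMod 2) W = k + 1}
    set d := finrank (ZMod 2) V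
    let r (W : {W : Submodule (ZMod 2) V // finrank (ZMod 2) W = k + 1}) (v : V) : Prop := v ∈ W.1
    have habove : ∀ W, (#((univ.erase 0).bipartiteAbove r W) : ℝ) = 2 ^ (k + 1) - 1 := by
      intro W
      rw [bipartiteAbove, filter_erase, card_erase_of_mem (by simp [r, W.1.zero_mem]),
        ← Fintype.card_subtype, ← Nat.card_eq_fintype_card, card_submodule_eq_two_pow, W.2,
        Nat.cast_sub Nat.one_le_two_pow]
      norm_num
    have hbelow :
        ∀ v ∈ univ.erase (0 : V), (#(univ.bipartiteBelow r v) : ℝ) = gbinomR (d - 1) k := by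
      intro v hv
      have hv : v ≠ 0 := ne_of_mem_erase hv
      rw [bipartiteBelow, ← Fintype.card_subtype, ← Nat.card_eq_fintype_card,
        card_finrank_succ_mem_eq_card_quotient hv, ih, finrank_quotient_span_singleton hv]
    have hdouble := congrArg (Nat.cast (R := ℝ))
      (sum_card_bipartiteAbove_eq_sum_card_bipartiteBelow r (s := univ) (t := univ.erase 0))
    push_cast at hdouble
    rw [sum_congr rfl fun W _ ↦ habove W, sum_congr rfl hbelow, sum_const, sum_const,
      card_erase_of_mem (mem_univ 0), card_univ, card_univ, ← Nat.card_eq_fintype_card,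
      ← Nat.card_eq_fintype_card, nsmul_eq_mul, nsmul_eq_mul] at hdouble
    have hV : ((Nat.card V - 1 : ℕ) : ℝ) = 2 ^ d - 1 := by
      rw [Module.natCard_eq_pow_finrank (K := ZMod 2), Nat.card_zmod,
        Nat.cast_sub Nat.one_le_two_pow]
      norm_num [d]
    rw [hV, ← gbinomR_succ_mul_pred] at hdouble
    exact mul_right_cancel₀ (two_pow_sub_one_pos (Nat.add_one_ne_zero k)).ne' hdouble

end Counting

section SchurTest

variable {ι : Type*} [Fintype ι] {a : ι → ι → ℝ} {φ : ι → ℝ} {μ : ℝ}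

theorem sum_sq_le_of_schur_test (ha : ∀ u v, 0 ≤ a u v) (hsymm : ∀ u v, a u v = a v u)
    (hμ : 0 ≤ μ) (hφ : ∀ u, ∑ v, a u v * φ v ≤ μ * φ u) (hsupp : ∀ u v, a u v ≠ 0 → 0 < φ v)
    (y : ι → ℝ) :
    ∑ u, (∑ v, a u v * y v) ^ 2 ≤ μ ^ 2 * ∑ v, y v ^ 2 := by
  have hweight : ∀ u v, 0 ≤ a u v * y v ^ 2 / φ v := fun u v ↦ by
    rcases eq_or_ne (a u v) 0 with h | h
    · simp [h]
    · have := hsupp u v h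
      have := ha u v
      positivity
  have hrow : ∀ u, (∑ v, a u v * y v) ^ 2 ≤ μ * φ u * ∑ v, a u v * y v ^ 2 / φ v := by
    intro u
    refine (sum_sq_le_sum_mul_sum_of_sq_le_mul _ (fun v _ ↦ ?_) (fun v _ ↦ hweight u v)
      (fun v _ ↦ ?_)).trans (mul_le_mul_of_nonneg_right (hφ u) (sum_nonneg fun v _ ↦ hweight u v))
    · rcases eq_or_ne (a u v) 0 with h | h
      · simp [h]
      · exact mul_nonneg (ha u v) (hsupp u v h).le
    · rcases eq_or_ne (a u v) 0 with h | h
      · simp [h]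
      · have := (hsupp u v h).ne'
        exact (by field_simp : _ = _).le
  have hcol : ∀ v, (∑ u, a u v * φ u) * (y v ^ 2 / φ v) ≤ μ * y v ^ 2 := by
    intro v
    by_cases hv : 0 < φ v
    · calc (∑ u, a u v * φ u) * (y v ^ 2 / φ v)
          ≤ μ * φ v * (y v ^ 2 / φ v) := by
            simp_rw [hsymm _ v]
            exact mul_le_mul_of_nonneg_right (hφ v) (by positivity)
        _ = μ * y v ^ 2 := by field_simp
    · have : ∀ u, a u v = 0 := fun u ↦ by_contra fun h ↦ hv (hsupp u v h)
      simp only [this, zero_mul, sum_const_zero]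
      positivity
  calc ∑ u, (∑ v, a u v * y v) ^ 2
      ≤ ∑ u, μ * φ u * ∑ v, a u v * y v ^ 2 / φ v := sum_le_sum fun u _ ↦ hrow u
    _ = μ * ∑ v, (∑ u, a u v * φ u) * (y v ^ 2 / φ v) := by
        simp_rw [mul_sum, sum_mul, mul_sum]
        rw [sum_comm]
        exact sum_congr rfl fun v _ ↦ sum_congr rfl fun u _ ↦ by ring
    _ ≤ μ * ∑ v, μ * y v ^ 2 := mul_le_mul_of_nonneg_left (sum_le_sum fun v _ ↦ hcol v) hμ
    _ = μ ^ 2 * ∑ v, y v ^ 2 := by rw [← mul_sum]; ring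

theorem opNorm_le_of_schur_test (T : EuclideanSpace ℂ ι →L[ℂ] EuclideanSpace ℂ ι)
    (hT : ∀ x u, T x u = ∑ v, (a u v : ℂ) * x v)
    (ha : ∀ u v, 0 ≤ a u v) (hsymm : ∀ u v, a u v = a v u)
    (hμ : 0 ≤ μ) (hφ : ∀ u, ∑ v, a u v * φ v ≤ μ * φ u) (hsupp : ∀ u v, a u v ≠ 0 → 0 < φ v) :
    ‖T‖ ≤ μ := by
  refine T.opNorm_le_bound hμ fun x ↦ ?_
  have hentry : ∀ u, ‖T x u‖ ≤ ∑ v, a u v * ‖x v‖ := fun u ↦ by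
    rw [hT]
    refine (norm_sum_le _ _).trans_eq (sum_congr rfl fun v _ ↦ ?_)
    rw [norm_mul, Complex.norm_real, Real.norm_of_nonneg (ha u v)]
  refine (pow_le_pow_iff_left₀ (norm_nonneg _) (by positivity) two_ne_zero).1 ?_
  calc ‖T x‖ ^ 2 = ∑ u, ‖T x u‖ ^ 2 := EuclideanSpace.norm_sq_eq _
    _ ≤ ∑ u, (∑ v, a u v * ‖x v‖) ^ 2 := by
        gcongr with u
        exact hentry u
    _ ≤ μ ^ 2 * ∑ v, ‖x v‖ ^ 2 := sum_sq_le_of_schur_test ha hsymm hμ hφ hsupp _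
    _ = (μ * ‖x‖) ^ 2 := by rw [mul_pow, EuclideanSpace.norm_sq_eq]

end SchurTest

theorem norm_le_opNorm_of_apply_eq_smul {𝕜 E : Type*} [NontriviallyNormedField 𝕜]
    [NormedAddCommGroup E] [NormedSpace 𝕜 E] {T : E →L[𝕜] E} {c : 𝕜} {ψ : E} (hψ : ψ ≠ 0)
    (h : T ψ = c • ψ) : ‖c‖ ≤ ‖T‖ := by
  refine le_of_mul_le_mul_right ?_ (norm_pos_iff.2 hψ)
  rw [← norm_smul, ← h]
  exact T.le_opNorm ψ

lemma sum_outer_self_apply {ι κ : Type*} [Fintype ι] [DecidableEq ι] (s : Finset κ)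
    (ψ : κ → EuclideanSpace ℂ ι) (x : EuclideanSpace ℂ ι) (u : ι) :
    (∑ i ∈ s, outer (ψ i) (ψ i)) x u = ∑ v, (∑ i ∈ s, ψ i u * star (ψ i v)) * x v := by
  simp only [_root_.sum_apply, outer, ContinuousLinearMap.smulRight_apply, innerSL_apply_apply,
    PiLp.inner_apply, RCLike.inner_apply, WithLp.ofLp_sum, WithLp.ofLp_smul, Finset.sum_apply,
    Pi.smul_apply, smul_eq_mul, sum_mul, Complex.star_def]
  rw [sum_comm]
  exact sum_congr rfl fun v _ ↦ sum_congr rfl fun i _ ↦ by ring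

section SubspaceStates

variable {n k : ℕ}

noncomputable def incidence (n k : ℕ) (v : Fin n → ZMod 2) : ℕ :=
  #{W : Grassmannian n k | v ∈ W.1}

noncomputable def coincidence (n k : ℕ) (u v : Fin n → ZMod 2) : ℕ :=
  #{W : Grassmannian n k | u ∈ W.1 ∧ v ∈ W.1}

lemma subspaceState_apply (W : Submodule (ZMod 2) (Fin n → ZMod 2)) (v : Fin n → ZMod 2) :
    subspaceState W v =
      if v ∈ W then (((Real.sqrt 2 : ℝ) : ℂ) ^ Module.finrank (ZMod 2) W)⁻¹ else 0 := by
  have hsum : ∑ u : W, Pi.single (M := fun _ ↦ ℂ) (u : Fin n → ZMod 2) 1 v =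
      if v ∈ W then 1 else 0 := by
    split_ifs with h
    · rw [sum_eq_single ⟨v, h⟩ (fun u _ hu ↦ ?_) (by simp)]
      · simp
      · exact Pi.single_eq_of_ne (fun h' ↦ hu (Subtype.ext h'.symm)) _
    · exact sum_eq_zero fun u _ ↦ Pi.single_eq_of_ne (fun h' : v = u ↦ h (h' ▸ u.2)) _
  simp [subspaceState, hsum]

lemma subspaceState_mul_star (W : Submodule (ZMod 2) (Fin n → ZMod 2)) (u v : Fin n → ZMod 2) :
    subspaceState W u * star (subspaceState W v) =
      if u ∈ W ∧ v ∈ W then ((((2 : ℝ) ^ Module.finrank (ZMod 2) W)⁻¹ : ℝ) : ℂ) else 0 := by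
  have hsq (d : ℕ) : (Real.sqrt 2 ^ d)⁻¹ * (Real.sqrt 2 ^ d)⁻¹ = ((2 : ℝ) ^ d)⁻¹ := by
    rw [← mul_inv, ← mul_pow, Real.mul_self_sqrt zero_le_two]
  rw [subspaceState_apply, subspaceState_apply]
  split_ifs <;> simp_all [← hsq]

lemma card_grassmannian (n k : ℕ) : (Fintype.card (Grassmannian n k) : ℝ) = gbinomR n k := by
  rw [← Nat.card_eq_fintype_card, card_submodule_finrank_eq_gbinomR, Module.finrank_fin_fun]

lemma incidence_zero : incidence n k 0 = Fintype.card (Grassmannian n k) := by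
  simp [incidence]

lemma incidence_of_ne_zero {v : Fin n → ZMod 2} (hv : v ≠ 0) :
    (incidence n (k + 1) v : ℝ) = gbinomR (n - 1) k := by
  rw [incidence, ← Fintype.card_subtype, ← Nat.card_eq_fintype_card,
    card_finrank_succ_mem_eq_card_quotient hv, card_submodule_finrank_eq_gbinomR,
    finrank_quotient_span_singleton hv, Module.finrank_fin_fun]

lemma coincidence_comm (u v : Fin n → ZMod 2) : coincidence n k u v = coincidence n k v u := by
  simp only [coincidence, and_comm]

lemma incidence_pos_of_coincidence_ne_zero {u v : Fin n → ZMod 2} (h : coincidence n k u v ≠ 0) :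
    0 < incidence n k v :=
  (Nat.pos_of_ne_zero h).trans_le <| card_le_card fun W hW ↦ by
    simp only [mem_filter] at hW ⊢
    exact ⟨hW.1, hW.2.2⟩

lemma sum_subspaceState_mul_star (u v : Fin n → ZMod 2) :
    ∑ W : Grassmannian n k, subspaceState W.1 u * star (subspaceState W.1 v) =
      (((2 ^ k)⁻¹ * coincidence n k u v : ℝ) : ℂ) := by
  rw [sum_congr rfl fun W _ ↦ by rw [subspaceState_mul_star, W.2], ← sum_filter, sum_const,
    nsmul_eq_mul, coincidence]
  push_cast
  ring

lemma sum_subspaceState_apply (v : Fin n → ZMod 2) :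
    (∑ W : Grassmannian n k, subspaceState W.1) v =
      (((Real.sqrt 2 : ℝ) : ℂ) ^ k)⁻¹ * incidence n k v := by
  rw [WithLp.ofLp_sum, Finset.sum_apply, sum_congr rfl fun W _ ↦ by rw [subspaceState_apply, W.2],
    ← sum_filter, sum_const, nsmul_eq_mul, incidence, mul_comm]

lemma sum_incidence_of_mem (W : Grassmannian n k) :
    ∑ v with v ∈ W.1, (incidence n k v : ℝ) =
      gbinomR n k + (2 ^ k - 1) * gbinomR (n - 1) (k - 1) := by
  rcases k with _ | k
  · obtain ⟨W, hW⟩ := W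
    obtain rfl := Submodule.finrank_eq_zero.1 hW
    simp [filter_eq', incidence_zero, card_grassmannian]
  · have h0 : (0 : Fin n → ZMod 2) ∈ ({v | v ∈ W.1} : Finset _) := by simp
    have hW : #({v | v ∈ W.1} : Finset (Fin n → ZMod 2)) = 2 ^ (k + 1) := by
      rw [← Fintype.card_subtype, ← Nat.card_eq_fintype_card, card_submodule_eq_two_pow, W.2]
    rw [← add_sum_erase _ _ h0, incidence_zero, card_grassmannian,
      sum_congr rfl fun v hv ↦ incidence_of_ne_zero (ne_of_mem_erase hv), sum_const,
      card_erase_of_mem h0, hW, nsmul_eq_mul, Nat.cast_sub Nat.one_le_two_pow]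
    norm_num

lemma sum_coincidence_mul_incidence (u : Fin n → ZMod 2) :
    ∑ v, (coincidence n k u v : ℝ) * incidence n k v =
      (gbinomR n k + (2 ^ k - 1) * gbinomR (n - 1) (k - 1)) * incidence n k u := by
  calc ∑ v, (coincidence n k u v : ℝ) * incidence n k v
      = ∑ W : Grassmannian n k,
          if u ∈ W.1 then ∑ v with v ∈ W.1, (incidence n k v : ℝ) else 0 := by
        simp_rw [coincidence, card_filter, ite_and]
        push_cast
        simp_rw [sum_mul, sum_filter]
        rw [sum_comm]
        refine sum_congr rfl fun W _ ↦ ?_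
        split_ifs <;> simp
    _ = _ := by
        simp_rw [sum_incidence_of_mem]
        rw [← sum_filter, sum_const, nsmul_eq_mul, incidence, mul_comm]

lemma inv_two_pow_mul_gbinomR_add_eq_sum (hkn : k ≤ n) :
    (2 ^ k)⁻¹ * (gbinomR n k + (2 ^ k - 1) * gbinomR (n - 1) (k - 1)) =
      ∑ m ∈ range (k + 1),
        2 ^ (m ^ 2) * gbinomR (n - k) m * gbinomR k m * (2 : ℝ) ^ (-(m : ℤ)) := by
  rcases k with _ | j
  · simp [gbinomR_zero_right]
  · have hpascal := gbinomR_succ_succ' (n - 1) j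
    rw [Nat.sub_add_cancel (by omega : 1 ≤ n)] at hpascal
    rw [sum_gbinomR_mul_gbinomR_mul_zpow, show n - (j + 1) + j = n - 1 by omega, hpascal,
      Nat.add_sub_cancel]
    field_simp
    ring

lemma sum_outer_subspaceState_apply (x : EuclideanSpace ℂ (Fin n → ZMod 2))
    (u : Fin n → ZMod 2) :
    (∑ W : Grassmannian n k, outer (subspaceState W.1) (subspaceState W.1)) x u =
      ∑ v, (((2 ^ k)⁻¹ * coincidence n k u v : ℝ) : ℂ) * x v := by
  rw [sum_outer_self_apply univ (fun W : Grassmannian n k ↦ subspaceState W.1)]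
  simp_rw [sum_subspaceState_mul_star]

lemma sum_subspaceState_ne_zero (hkn : k ≤ n) :
    ∑ W : Grassmannian n k, subspaceState W.1 ≠ 0 := by
  have hcard : (Fintype.card (Grassmannian n k) : ℂ) ≠ 0 := by
    rw [← Complex.ofReal_natCast, card_grassmannian]
    exact Complex.ofReal_ne_zero.2 (gbinomR_pos hkn).ne'
  intro h
  have h0 := congrArg (fun ψ : EuclideanSpace ℂ (Fin n → ZMod 2) ↦ ψ 0) h
  simp [sum_subspaceState_apply, incidence_zero, hcard] at h0

theorem sum_outer_subspaceState_apply_sum :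
    (∑ W : Grassmannian n k, outer (subspaceState W.1) (subspaceState W.1))
        (∑ W : Grassmannian n k, subspaceState W.1) =
      (((2 ^ k)⁻¹ * (gbinomR n k + (2 ^ k - 1) * gbinomR (n - 1) (k - 1)) : ℝ) : ℂ) •
        ∑ W : Grassmannian n k, subspaceState W.1 := by
  ext u
  have key : ∑ v, (coincidence n k u v : ℂ) * incidence n k v =
      ((gbinomR n k + (2 ^ k - 1) * gbinomR (n - 1) (k - 1) : ℝ) : ℂ) * incidence n k u := by
    exact_mod_cast congrArg (fun r : ℝ ↦ (r : ℂ)) (sum_coincidence_mul_incidence u)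
  simp_rw [sum_outer_subspaceState_apply, PiLp.smul_apply, sum_subspaceState_apply, smul_eq_mul]
  calc _ = ((2 : ℂ) ^ k)⁻¹ * (((Real.sqrt 2 : ℝ) : ℂ) ^ k)⁻¹ *
        ∑ v, (coincidence n k u v : ℂ) * incidence n k v := by
        rw [mul_sum]
        refine sum_congr rfl fun v _ ↦ ?_
        push_cast
        ring
    _ = _ := by
        rw [key]
        push_cast
        ring

theorem norm_sum_outer_subspaceState (hkn : k ≤ n) :
    ‖∑ W : Grassmannian n k, outer (subspaceState W.1) (subspaceState W.1)‖ =
      (2 ^ k)⁻¹ * (gbinomR n k + (2 ^ k - 1) * gbinomR (n - 1) (k - 1)) := by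
  have hμ : 0 ≤ (2 ^ k : ℝ)⁻¹ * (gbinomR n k + (2 ^ k - 1) * gbinomR (n - 1) (k - 1)) := by
    have : (0 : ℝ) ≤ 2 ^ k - 1 := sub_nonneg.2 (one_le_pow₀ one_le_two)
    have := gbinomR_nonneg n k
    have := gbinomR_nonneg (n - 1) (k - 1)
    positivity
  refine le_antisymm (opNorm_le_of_schur_test _ (φ := fun v ↦ incidence n k v)
    sum_outer_subspaceState_apply (fun u v ↦ by positivity)
    (fun u v ↦ by rw [coincidence_comm]) hμ (fun u ↦ ?_) (fun u v h ↦ ?_)) ?_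
  · refine le_of_eq ?_
    rw [mul_assoc, ← sum_coincidence_mul_incidence, mul_sum]
    simp_rw [mul_assoc]
  · have := incidence_pos_of_coincidence_ne_zero (Nat.cast_ne_zero.1 (right_ne_zero_of_mul h))
    positivity
  · have := norm_le_opNorm_of_apply_eq_smul (sum_subspaceState_ne_zero hkn)
      sum_outer_subspaceState_apply_sum
    rwa [Complex.norm_real, Real.norm_of_nonneg hμ] at this

end SubspaceStates

/-- For `0 ≤ k ≤ n` and `N = [n choose k]₂`,
`‖(1/N) ∑_W |W⟩⟨W|‖ = (1/N) ∑_{m=0}^k 2^{m²}·[n-k choose m]₂·[k choose m]₂·2^{-m}`; moreover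
the nonzero vector `∑_W |W⟩` is an eigenvector of `∑_W |W⟩⟨W|` attaining this norm, i.e. with
eigenvalue `∑_{m=0}^k 2^{m²}·[n-k choose m]₂·[k choose m]₂·2^{-m}`. -/
theorem norm_expectation_outer_subspaceState_eq {n k : ℕ} (hkn : k ≤ n) :
    ‖((gbinomR n k : ℝ) : ℂ)⁻¹ •
        ∑ W : Grassmannian n k,
          outer (subspaceState (W : Submodule (ZMod 2) (Fin n → ZMod 2)))
            (subspaceState (W : Submodule (ZMod 2) (Fin n → ZMod 2)))‖ =
      (gbinomR n k)⁻¹ *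
        ∑ m ∈ Finset.range (k + 1),
          2 ^ (m ^ 2) * gbinomR (n - k) m * gbinomR k m * (2 : ℝ) ^ (-(m : ℤ)) ∧
    (∑ W : Grassmannian n k,
        outer (subspaceState (W : Submodule (ZMod 2) (Fin n → ZMod 2)))
          (subspaceState (W : Submodule (ZMod 2) (Fin n → ZMod 2))))
        (∑ W : Grassmannian n k, subspaceState (W : Submodule (ZMod 2) (Fin n → ZMod 2))) =
      (((∑ m ∈ Finset.range (k + 1),
          2 ^ (m ^ 2) * gbinomR (n - k) m * gbinomR k m * (2 : ℝ) ^ (-(m : ℤ)) : ℝ)) : ℂ) •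
        ∑ W : Grassmannian n k, subspaceState (W : Submodule (ZMod 2) (Fin n → ZMod 2)) ∧
    (∑ W : Grassmannian n k, subspaceState (W : Submodule (ZMod 2) (Fin n → ZMod 2))) ≠ 0 := by
  have heigen := inv_two_pow_mul_gbinomR_add_eq_sum hkn
  refine ⟨?_, heigen ▸ sum_outer_subspaceState_apply_sum, sum_subspaceState_ne_zero hkn⟩
  rw [norm_smul, norm_inv, Complex.norm_real, Real.norm_of_nonneg (gbinomR_nonneg n k),
    norm_sum_outer_subspaceState hkn, heigen]
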